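/- Under the stated assumptions, fix β_0 ∈ (0, β) and set ε_n = n^{−β_0/α}. Then there exists a constant C > 0 such that for all n ≥ 1, ∫_0^1 q^{1−ρ} L(1/q) · F̄(a_n ε_n q^{1/α'}) dq ≤ C (a_n ε_n)^{−α}. (Probabilistically: P(|X|/(a_n q^{1/α'}) > ε_n, η_1^{(q)} = 1) ≤ C (a_n ε_n)^{−α}, where given q the variable η_1^{(q)} is Bernoulli(q) and |X| has tail function F̄.) -/

import Mathlib

/-!
Near `0` we have `F̄ ≤ 1`, and at infinity `x ^ α F̄(x) → C_X`, so `F̄(x) ≤ A x^{-α}` for all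
`x > 0`. With `s = a_n ε_n` the integrand is then at most `A s^{-α} q^{-β} L(1/q)`, since
`(s q^{1/α'})^{-α} = s^{-α} q^{-α/α'}` and `1 - ρ - α/α' = -β`. As `β < 1`, `q^{-β} L(1/q)` is
integrable near `0` by Potter's bound `L(y) = O(y^δ)` (a consequence of the uniform convergence
theorem for measurable slowly varying functions), and near `1` it is comparable to
`q^{1-ρ} L(1/q)`. If the latter is not integrable on `(0, 1)`, then neither is the integrand,
because `F̄ > 0` is antitone; its integral is then `0`.
-/

open Filter Set MeasureTheory Topology
open scoped ENNReal

section UniformConvergence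

variable {h : ℝ → ℝ}

lemma tendsto_volume_setOf_le_abs_sub (hm : Measurable h)
    (hconv : ∀ u, Tendsto (fun t => h (t + u) - h t) atTop (𝓝 0))
    {t : ℕ → ℝ} (ht : Tendsto t atTop atTop) {ε : ℝ} (hε : 0 < ε) :
    Tendsto (fun k => volume (Icc (0 : ℝ) 2 ∩ {x | ε ≤ |h (t k + x) - h (t k)|})) atTop (𝓝 0) := by
  rw [← measure_empty (μ := (volume : Measure ℝ))]
  refine tendsto_measure_of_tendsto_indicator atTop
    (fun k => measurableSet_Icc.inter (measurableSet_le measurable_const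
      ((hm.comp (measurable_const.add measurable_id)).sub measurable_const).abs))
    measurableSet_Icc (by simp [Real.volume_Icc]) (Eventually.of_forall fun k => inter_subset_left)
    fun x => ?_
  have hx : Tendsto (fun k => |h (t k + x) - h (t k)|) atTop (𝓝 0) := by
    simpa using ((hconv x).comp ht).abs
  filter_upwards [hx.eventually_lt_const hε] with k hk
  simpa using fun _ _ => hk

/-- The uniform convergence theorem for slowly varying functions, in additive form. -/
lemma exists_forall_abs_sub_le_of_tendsto_sub (hm : Measurable h)
    (hconv : ∀ u, Tendsto (fun t => h (t + u) - h t) atTop (𝓝 0)) {ε : ℝ} (hε : 0 < ε) :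
    ∃ T, ∀ t ≥ T, ∀ u ∈ Icc (0 : ℝ) 1, |h (t + u) - h t| ≤ ε := by
  by_contra! hbad
  choose t ht u hu hbig using fun k : ℕ => hbad k
  have htop : Tendsto t atTop atTop := tendsto_atTop_mono ht tendsto_natCast_atTop_atTop
  have htop' : Tendsto (fun k => t k + u k) atTop atTop :=
    tendsto_atTop_mono (fun k => le_add_of_nonneg_right (hu k).1) htop
  set A := fun k => Icc 0 2 ∩ {x | ε / 2 ≤ |h (t k + x) - h (t k)|}
  set B := fun k => Icc 0 2 ∩ {x | ε / 2 ≤ |h (t k + u k + x) - h (t k + u k)|}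
  have hsmall : Tendsto (fun k => volume (A k) + volume (B k)) atTop (𝓝 0) := by
    simpa using (tendsto_volume_setOf_le_abs_sub hm hconv htop (half_pos hε)).add
      (tendsto_volume_setOf_le_abs_sub hm hconv htop' (half_pos hε))
  obtain ⟨k, hk⟩ := (hsmall.eventually_lt_const zero_lt_one).exists
  -- otherwise the triangle inequality through `h (t k + x)` gives `|h (t k + u k) - h (t k)| < ε`
  have hcover : Icc (u k) 2 ⊆ A k ∪ (· + -u k) ⁻¹' B k := by
    intro x hx
    by_contra hx'
    simp only [A, B, mem_union, mem_preimage, mem_inter_iff, mem_Icc, mem_ofPred_eq, not_or,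
      not_and, not_le] at hx'
    have h1 := hx'.1 ⟨(hu k).1.trans hx.1, hx.2⟩
    have h2 := hx'.2 ⟨by linarith [hx.1], by linarith [hx.2, (hu k).1]⟩
    rw [show t k + u k + (x + -u k) = t k + x by ring, abs_sub_comm] at h2
    linarith [abs_sub_le (h (t k + u k)) (h (t k + x)) (h (t k)), hbig k]
  have : (1 : ℝ≥0∞) ≤ volume (A k) + volume (B k) :=
    calc (1 : ℝ≥0∞) ≤ ENNReal.ofReal (2 - u k) := by
          rw [← ENNReal.ofReal_one]; exact ENNReal.ofReal_le_ofReal (by linarith [(hu k).2])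
      _ = volume (Icc (u k) 2) := (Real.volume_Icc ..).symm
      _ ≤ volume (A k) + volume ((· + -u k) ⁻¹' B k) :=
          (measure_mono hcover).trans (measure_union_le _ _)
      _ = volume (A k) + volume (B k) := by rw [measure_preimage_add_right]
  exact (not_lt.2 this) hk

lemma le_add_mul_of_forall_le_add {T δ : ℝ} (hδ : 0 ≤ δ)
    (hstep : ∀ t ≥ T, ∀ u ∈ Icc (0 : ℝ) 1, h (t + u) ≤ h t + δ) :
    ∀ t ≥ T, h t ≤ h T + δ * (t - T + 1) := by
  have hind : ∀ n : ℕ, ∀ t ∈ Icc T (T + n), h t ≤ h T + δ * n := by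
    intro n
    induction n with
    | zero => intro t ht; simp [le_antisymm (by simpa using ht.2) ht.1]
    | succ n ih =>
      intro t ht
      set t' := max T (t - 1)
      have h1 := hstep t' (le_max_left _ _) (t - t')
        ⟨by simp [t', ht.1], by linarith [le_max_right T (t - 1)]⟩
      have h2 := ih t' ⟨le_max_left _ _, max_le (by simp) (by push_cast at ht; linarith [ht.2])⟩
      rw [add_sub_cancel] at h1
      push_cast
      linarith
  intro t ht
  have hn := hind ⌈t - T⌉₊ t ⟨ht, by linarith [Nat.le_ceil (t - T)]⟩
  have := Nat.ceil_lt_add_one (sub_nonneg.2 ht)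
  nlinarith

end UniformConvergence

def IsSlowlyVarying (L : ℝ → ℝ) : Prop :=
  ∀ c : ℝ, 0 < c → Tendsto (fun x : ℝ => L (c * x) / L x) atTop (𝓝 1)

namespace IsSlowlyVarying

variable {L : ℝ → ℝ}

/-- Potter's bound. -/
lemma exists_le_mul_rpow (hL : IsSlowlyVarying L) (hLm : Measurable L)
    (hLpos : ∀ x, 0 < x → 0 < L x) {δ : ℝ} (hδ : 0 < δ) :
    ∃ Y M : ℝ, 1 ≤ Y ∧ ∀ y ≥ Y, L y ≤ M * y ^ δ := by
  set h : ℝ → ℝ := fun t => Real.log (L (Real.exp t))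
  have hconv : ∀ u, Tendsto (fun t => h (t + u) - h t) atTop (𝓝 0) := by
    intro u
    have hlog := ((Real.continuousAt_log one_ne_zero).tendsto.comp
      ((hL _ (Real.exp_pos u)).comp Real.tendsto_exp_atTop))
    rw [Real.log_one] at hlog
    refine hlog.congr fun t => ?_
    simp only [Function.comp, h, Real.exp_add, mul_comm (Real.exp t)]
    exact Real.log_div (hLpos _ (by positivity)).ne' (hLpos _ (Real.exp_pos t)).ne'
  have hm : Measurable h := (hLm.comp Real.measurable_exp).log
  obtain ⟨T, hT⟩ := exists_forall_abs_sub_le_of_tendsto_sub hm hconv hδ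
  have hgrowth := le_add_mul_of_forall_le_add (h := h) hδ.le fun t ht u hu => by
    linarith [(abs_le.1 (hT t ht u hu)).2]
  refine ⟨max (Real.exp T) 1, Real.exp (h T + δ * (1 - T)), le_max_right _ _, fun y hy => ?_⟩
  have hy0 : 0 < y := one_pos.trans_le ((le_max_right _ _).trans hy)
  have hTy : T ≤ Real.log y := (Real.le_log_iff_exp_le hy0).2 ((le_max_left _ _).trans hy)
  have hlog := hgrowth _ hTy
  simp only [h, Real.exp_log hy0] at hlog
  calc L y = Real.exp (Real.log (L y)) := (Real.exp_log (hLpos y hy0)).symm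
    _ ≤ Real.exp (h T + δ * (Real.log y - T + 1)) := Real.exp_le_exp.2 hlog
    _ = Real.exp (h T + δ * (1 - T)) * y ^ δ := by
      rw [Real.rpow_def_of_pos hy0, ← Real.exp_add]; ring_nf

lemma exists_integrableOn_Ioo_rpow_mul_comp_inv (hL : IsSlowlyVarying L) (hLm : Measurable L)
    (hLpos : ∀ x, 0 < x → 0 < L x) {p : ℝ} (hp : -1 < p) :
    ∃ c, 0 < c ∧ c ≤ 1 ∧ IntegrableOn (fun q => q ^ p * L (1 / q)) (Ioo 0 c) := by
  obtain ⟨Y, M, hY, hpotter⟩ := hL.exists_le_mul_rpow hLm hLpos (by linarith : 0 < (p + 1) / 2)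
  refine ⟨Y⁻¹, by positivity, inv_le_one_of_one_le₀ hY, ?_⟩
  have hbound : IntegrableOn (fun q => M * q ^ (p - (p + 1) / 2)) (Ioo 0 Y⁻¹) :=
    ((intervalIntegral.integrableOn_Ioo_rpow_iff (by positivity)).2 (by linarith)).const_mul M
  refine hbound.mono' (by fun_prop) (ae_restrict_of_forall_mem measurableSet_Ioo fun q hq => ?_)
  have hYq : Y ≤ 1 / q := by
    rw [le_one_div (by positivity) hq.1, one_div]; exact hq.2.le
  rw [Real.norm_of_nonneg
    (mul_nonneg (Real.rpow_nonneg hq.1.le _) (hLpos _ (one_div_pos.2 hq.1)).le)]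
  calc q ^ p * L (1 / q) ≤ q ^ p * (M * (1 / q) ^ ((p + 1) / 2)) :=
        mul_le_mul_of_nonneg_left (hpotter _ hYq) (Real.rpow_nonneg hq.1.le _)
    _ = M * q ^ (p - (p + 1) / 2) := by
        rw [Real.rpow_sub hq.1, one_div, Real.inv_rpow hq.1.le]; ring

lemma integrableOn_rpow_mul_comp_inv (hL : IsSlowlyVarying L) (hLm : Measurable L)
    (hLpos : ∀ x, 0 < x → 0 < L x) {p r : ℝ} (hp : -1 < p)
    (hr : IntegrableOn (fun q => q ^ r * L (1 / q)) (Ioo 0 1)) :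
    IntegrableOn (fun q => q ^ p * L (1 / q)) (Ioo 0 1) := by
  obtain ⟨c, hc0, hc1, hzero⟩ := hL.exists_integrableOn_Ioo_rpow_mul_comp_inv hLm hLpos hp
  have hrc : IntegrableOn (fun q => q ^ r * L (1 / q)) (Icc c 1) :=
    ((integrableOn_Icc_iff_integrableOn_Ioo).2 hr).mono_set (Icc_subset_Icc hc0.le le_rfl)
  have hone : IntegrableOn (fun q => q ^ p * L (1 / q)) (Icc c 1) := by
    have hcont : ContinuousOn (fun q : ℝ => q ^ (p - r)) (Icc c 1) :=
      continuousOn_id.rpow_const fun q hq => Or.inl (hc0.trans_le hq.1).ne'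
    refine (hrc.continuousOn_mul hcont isCompact_Icc).congr_fun (fun q hq => ?_) measurableSet_Icc
    dsimp only
    rw [← mul_assoc, ← Real.rpow_add (hc0.trans_le hq.1), sub_add_cancel]
  exact (hzero.union hone).mono_set fun q hq => (lt_or_ge q c).imp (fun h => ⟨hq.1, h⟩)
    fun h => ⟨h, hq.2.le⟩

end IsSlowlyVarying

section Tail

variable {F : ℝ → ℝ} {α C : ℝ}

lemma exists_le_mul_rpow_neg_of_tendsto (hF1 : ∀ x, 0 < x → F x ≤ 1) (hα : 0 ≤ α)
    (htail : Tendsto (fun x => x ^ α * F x) atTop (𝓝 C)) :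
    ∃ A, ∀ x, 0 < x → F x ≤ A * x ^ (-α) := by
  obtain ⟨x₀, hx₀⟩ := eventually_atTop.1 (htail.eventually_le_const (lt_add_one C))
  refine ⟨max (C + 1) (x₀ ^ α), fun x hx => ?_⟩
  have hbound : x ^ α * F x ≤ max (C + 1) (x₀ ^ α) := by
    rcases le_total x₀ x with hxx₀ | hxx₀
    · exact (hx₀ x hxx₀).trans (le_max_left _ _)
    · calc x ^ α * F x ≤ x ^ α := mul_le_of_le_one_right (by positivity) (hF1 x hx)
        _ ≤ x₀ ^ α := Real.rpow_le_rpow hx.le hxx₀ hα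
        _ ≤ _ := le_max_right _ _
  calc F x = x ^ (-α) * (x ^ α * F x) := by
        rw [← mul_assoc, ← Real.rpow_add hx, neg_add_cancel, Real.rpow_zero, one_mul]
    _ ≤ x ^ (-α) * max (C + 1) (x₀ ^ α) := mul_le_mul_of_nonneg_left hbound (by positivity)
    _ = _ := mul_comm _ _

lemma pos_of_tendsto_rpow_mul (hF : AntitoneOn F (Ioi 0)) (hC : 0 < C)
    (htail : Tendsto (fun x => x ^ α * F x) atTop (𝓝 C)) {x : ℝ} (hx : 0 < x) : 0 < F x := by
  obtain ⟨y, hy, hxy⟩ := ((htail.eventually_const_lt hC).and (eventually_ge_atTop x)).exists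
  have hFy : 0 < F y := pos_of_mul_pos_right hy (Real.rpow_nonneg (hx.le.trans hxy) α)
  exact hFy.trans_le (hF hx (hx.trans_le hxy) hxy)

end Tail

section Scaling

variable {φ F : ℝ → ℝ} {s κ : ℝ}

lemma integrableOn_of_integrableOn_mul_comp_mul_rpow (hφm : Measurable φ)
    (hφ : ∀ q ∈ Ioo (0 : ℝ) 1, 0 ≤ φ q) (hF : AntitoneOn F (Ioi 0)) (hs : 0 < s) (hFs : 0 < F s)
    (hκ : 0 ≤ κ) (h : IntegrableOn (fun q => φ q * F (s * q ^ κ)) (Ioo 0 1)) :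
    IntegrableOn φ (Ioo 0 1) := by
  refine (h.const_mul (F s)⁻¹).mono' hφm.aestronglyMeasurable
    (ae_restrict_of_forall_mem measurableSet_Ioo fun q hq => ?_)
  have hsq : 0 < s * q ^ κ := mul_pos hs (Real.rpow_pos_of_pos hq.1 κ)
  have hmono : F s ≤ F (s * q ^ κ) :=
    hF hsq hs (mul_le_of_le_one_right hs.le (Real.rpow_le_one hq.1.le hq.2.le hκ))
  rw [Real.norm_of_nonneg (hφ q hq), inv_mul_eq_div, le_div_iff₀ hFs]
  exact mul_le_mul_of_nonneg_left hmono (hφ q hq)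

lemma setIntegral_mul_comp_mul_rpow_le {A α α' r : ℝ} (hs : 0 < s) {g : ℝ → ℝ}
    (hg : ∀ q ∈ Ioo (0 : ℝ) 1, 0 ≤ g q) (hF0 : ∀ x, 0 < x → 0 ≤ F x)
    (hFA : ∀ x, 0 < x → F x ≤ A * x ^ (-α))
    (hint : IntegrableOn (fun q => q ^ (r - α / α') * g q) (Ioo 0 1)) :
    ∫ q in Ioo 0 1, q ^ r * g q * F (s * q ^ (1 / α'))
      ≤ A * (∫ q in Ioo 0 1, q ^ (r - α / α') * g q) * s ^ (-α) := by
  have hpointwise : ∀ q ∈ Ioo (0 : ℝ) 1,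
      q ^ r * g q * F (s * q ^ (1 / α')) ≤ s ^ (-α) * (A * (q ^ (r - α / α') * g q)) := by
    intro q hq
    have hq0 := hq.1
    calc q ^ r * g q * F (s * q ^ (1 / α'))
        ≤ q ^ r * g q * (A * (s * q ^ (1 / α')) ^ (-α)) :=
          mul_le_mul_of_nonneg_left (hFA _ (by positivity))
            (mul_nonneg (Real.rpow_nonneg hq0.le _) (hg q hq))
      _ = s ^ (-α) * (A * (q ^ (r - α / α') * g q)) := by
          rw [Real.mul_rpow hs.le (by positivity), ← Real.rpow_mul hq0.le, Real.rpow_sub hq0,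
            show 1 / α' * -α = -(α / α') by ring, Real.rpow_neg hq0.le]
          field_simp
  calc ∫ q in Ioo 0 1, q ^ r * g q * F (s * q ^ (1 / α'))
      ≤ ∫ q in Ioo 0 1, s ^ (-α) * (A * (q ^ (r - α / α') * g q)) :=
        integral_mono_of_nonneg (ae_restrict_of_forall_mem measurableSet_Ioo fun q hq =>
            mul_nonneg (mul_nonneg (Real.rpow_nonneg hq.1.le _) (hg q hq))
              (hF0 _ (mul_pos hs (Real.rpow_pos_of_pos hq.1 _))))
          ((hint.const_mul A).const_mul _)
          (ae_restrict_of_forall_mem measurableSet_Ioo hpointwise)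
    _ = A * (∫ q in Ioo 0 1, q ^ (r - α / α') * g q) * s ^ (-α) := by
        rw [integral_const_mul, integral_const_mul]; ring

end Scaling

theorem small_exceedance_bound_general
    (L : ℝ → ℝ) (hLmeas : Measurable L) (hLpos : ∀ x : ℝ, 0 < x → 0 < L x)
    (hLslow : ∀ c : ℝ, 0 < c → Tendsto (fun x : ℝ => L (c * x) / L x) atTop (nhds 1))
    (Fbar : ℝ → ℝ) (hFmono : AntitoneOn Fbar (Set.Ioi 0))
    (hFrange : ∀ x : ℝ, 0 < x → Fbar x ∈ Set.Icc (0:ℝ) 1)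
    (α C_X α' ρ : ℝ) (hα : 0 < α) (hC : 0 < C_X)
    (hFtail : Tendsto (fun x : ℝ => x ^ α * Fbar x) atTop (nhds C_X))
    (hα' : 0 < α')
    (β : ℝ) (hβdef : β = α / α' + ρ - 1) (hβ : β ∈ Set.Ioo (0:ℝ) 1)
    (m : ℕ → ℕ) (hm1 : ∀ n, 1 ≤ m n)
    (a : ℕ → ℝ)
    (ha : ∀ n : ℕ, a n
      = (C_X * (Real.Gamma (1 - β) / β) * (n : ℝ) ^ β * (m n : ℝ) * L n) ^ (1 / α))
    (β₀ : ℝ)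
    (ε : ℕ → ℝ) (hε : ∀ n : ℕ, ε n = (n : ℝ) ^ (-(β₀ / α))) :
    ∃ C : ℝ, 0 < C ∧ ∀ n : ℕ, 1 ≤ n →
      (∫ q in Set.Ioo (0:ℝ) 1, q ^ (1 - ρ) * L (1 / q) * Fbar (a n * ε n * q ^ (1 / α')))
        ≤ C * (a n * ε n) ^ (-α) := by
  obtain ⟨hβ0, hβ1⟩ := hβ
  have hs : ∀ n : ℕ, 1 ≤ n → 0 < a n * ε n := by
    intro n hn
    have hn0 : (0 : ℝ) < n := by exact_mod_cast hn
    have hm0 : (0 : ℝ) < m n := by exact_mod_cast hm1 n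
    have := Real.Gamma_pos_of_pos (sub_pos.2 hβ1)
    have := hLpos n hn0
    rw [ha, hε]
    positivity
  by_cases hφ : IntegrableOn (fun q => q ^ (1 - ρ) * L (1 / q)) (Ioo 0 1)
  · obtain ⟨A, hA⟩ :=
      exists_le_mul_rpow_neg_of_tendsto (fun x hx => (hFrange x hx).2) hα.le hFtail
    have hψ : IntegrableOn (fun q => q ^ (1 - ρ - α / α') * L (1 / q)) (Ioo 0 1) :=
      IsSlowlyVarying.integrableOn_rpow_mul_comp_inv hLslow hLmeas hLpos (by linarith) hφ
    refine ⟨max (A * ∫ q in Ioo 0 1, q ^ (1 - ρ - α / α') * L (1 / q)) 1,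
      lt_max_of_lt_right one_pos, fun n hn => ?_⟩
    refine (setIntegral_mul_comp_mul_rpow_le (hs n hn)
      (fun q hq => (hLpos _ (one_div_pos.2 hq.1)).le) (fun x hx => (hFrange x hx).1) hA hψ).trans ?_
    exact mul_le_mul_of_nonneg_right (le_max_left _ _) (by have := hs n hn; positivity)
  · refine ⟨1, one_pos, fun n hn => ?_⟩
    rw [integral_undef fun h => hφ (integrableOn_of_integrableOn_mul_comp_mul_rpow (by fun_prop)
      (fun q hq => ?_) hFmono (hs n hn)
      (pos_of_tendsto_rpow_mul hFmono hC hFtail (hs n hn)) (by positivity) h)]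
    · have := hs n hn; positivity
    · exact mul_nonneg (Real.rpow_nonneg hq.1.le _) (hLpos _ (one_div_pos.2 hq.1)).le

/-- The small-exceedance estimate: with `β₀ ∈ (0,β)` and `ε_n = n^{−β₀/α}`, there is
`C > 0` such that for all `n ≥ 1`,
`P(|X|/(a_n q^{1/α′}) > ε_n, η₁^{(q)} = 1)
  = ∫_0^1 q^{1−ρ} L(1/q) F̄(a_n ε_n q^{1/α′}) dq ≤ C (a_n ε_n)^{−α}`. -/
theorem small_exceedance_bound
    (L : ℝ → ℝ) (hLmeas : Measurable L) (hLpos : ∀ x : ℝ, 0 < x → 0 < L x)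
    (hLslow : ∀ c : ℝ, 0 < c → Tendsto (fun x : ℝ => L (c * x) / L x) atTop (nhds 1))
    (Fbar : ℝ → ℝ) (hFmono : AntitoneOn Fbar (Set.Ioi 0))
    (hFrange : ∀ x : ℝ, 0 < x → Fbar x ∈ Set.Icc (0:ℝ) 1)
    (α C_X α' ρ : ℝ) (hα : 0 < α) (hC : 0 < C_X)
    (hFtail : Tendsto (fun x : ℝ => x ^ α * Fbar x) atTop (nhds C_X))
    (hα' : 0 < α') (hρ : ρ < 1)
    (β : ℝ) (hβdef : β = α / α' + ρ - 1) (hβ : β ∈ Set.Ioo (0:ℝ) 1)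
    (m : ℕ → ℕ) (hmmono : StrictMono m) (hm1 : ∀ n, 1 ≤ m n)
    (hmgrow : Tendsto (fun n : ℕ => (m n : ℝ) * L n / (n : ℝ) ^ (1 - ρ)) atTop atTop)
    (a : ℕ → ℝ)
    (ha : ∀ n : ℕ, a n
      = (C_X * (Real.Gamma (1 - β) / β) * (n : ℝ) ^ β * (m n : ℝ) * L n) ^ (1 / α))
    (β₀ : ℝ) (hβ₀ : β₀ ∈ Set.Ioo (0:ℝ) β)
    (ε : ℕ → ℝ) (hε : ∀ n : ℕ, ε n = (n : ℝ) ^ (-(β₀ / α))) :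
    ∃ C : ℝ, 0 < C ∧ ∀ n : ℕ, 1 ≤ n →
      (∫ q in Set.Ioo (0:ℝ) 1, q ^ (1 - ρ) * L (1 / q) * Fbar (a n * ε n * q ^ (1 / α')))
        ≤ C * (a n * ε n) ^ (-α) :=
  small_exceedance_bound_general L hLmeas hLpos hLslow Fbar hFmono hFrange α C_X α' ρ hα hC hFtail
    hα' β hβdef hβ m hm1 a ha β₀ ε hε
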